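/- arXiv:math/0105198 — 3 statements merged into one kernel-verified Lean document; each statement's English description precedes it below -/
import Mathlib

section
/- Let Δ ⊂ ℝ^n be an n-dimensional convex lattice polytope contained in the positive orthant. Then the moment map μ_Δ : (ℝ_{>0})^n → Int(Δ), defined by μ_Δ(x) = (Σ_{i∈Δ∩ℤ^n} x^i · i) / (Σ_{i∈Δ∩ℤ^n} x^i), takes values in the interior of Δ. -/
/-! The moment map is the center of mass of `S` with the positive weights `x ^ p`. If
`y = ∑ c p • p` is an interior point of the hull, then for small `ε > 0` the weights split as
`ε • c + (w - ε • c)` with both parts positive, so the center of mass is a proper convex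
combination of `y` and a point of the hull, and hence lies in the interior. -/

open Finset

section CenterMass

variable {ι 𝕜 E : Type*} [Field 𝕜] [AddCommGroup E] [Module 𝕜 E]

theorem Finset.centerMass_add_weights (s : Finset ι) {w₁ w₂ : ι → 𝕜} (z : ι → E)
    (h₁ : ∑ i ∈ s, w₁ i ≠ 0) (h₂ : ∑ i ∈ s, w₂ i ≠ 0) :
    s.centerMass (w₁ + w₂) z =
      ((∑ i ∈ s, w₁ i) / ∑ i ∈ s, (w₁ + w₂) i) • s.centerMass w₁ z +
        ((∑ i ∈ s, w₂ i) / ∑ i ∈ s, (w₁ + w₂) i) • s.centerMass w₂ z := by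
  simp only [centerMass, smul_smul, div_mul_eq_mul_div, mul_inv_cancel₀ h₁, mul_inv_cancel₀ h₂,
    one_div, ← smul_add, Pi.add_apply, add_smul, sum_add_distrib]

end CenterMass

section Interior

variable {𝕜 E : Type*} [Field 𝕜] [LinearOrder 𝕜] [IsStrictOrderedRing 𝕜]
  [AddCommGroup E] [Module 𝕜 E] [TopologicalSpace E] [IsTopologicalAddGroup E]
  [ContinuousConstSMul 𝕜 E]

theorem Finset.centerMass_mem_interior_convexHull {s : Finset E} {w : E → 𝕜}
    (hw : ∀ p ∈ s, 0 < w p) (hint : (interior (convexHull 𝕜 (s : Set E))).Nonempty) :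
    s.centerMass w id ∈ interior (convexHull 𝕜 (s : Set E)) := by
  have hs : s.Nonempty := by simpa using hint.mono interior_subset
  obtain ⟨y, hy⟩ := hint
  obtain ⟨c, hc₀, hc₁, rfl⟩ := Finset.mem_convexHull.mp (interior_subset hy)
  set ε := s.inf' hs w / 2
  have hε : 0 < ε := half_pos ((lt_inf'_iff hs).mpr hw)
  have hc_le : ∀ p ∈ s, c p ≤ 1 := fun p hp => hc₁ ▸ single_le_sum hc₀ hp
  have hv : ∀ p ∈ s, 0 < w p - ε * c p := fun p hp => sub_pos.mpr <|
    calc ε * c p ≤ ε := mul_le_of_le_one_right hε.le (hc_le p hp)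
      _ < s.inf' hs w := half_lt_self ((lt_inf'_iff hs).mpr hw)
      _ ≤ w p := inf'_le w hp
  have hsplit : w = ε • c + fun p => w p - ε * c p := by ext p; simp
  have hεc : ∑ p ∈ s, (ε • c) p = ε := by simp [← mul_sum, hc₁]
  have hv_sum : 0 < ∑ p ∈ s, (w p - ε * c p) := sum_pos hv hs
  have hw_sum : 0 < ∑ p ∈ s, w p := sum_pos hw hs
  rw [hsplit, s.centerMass_add_weights id (by rw [hεc]; exact hε.ne') hv_sum.ne',
    s.centerMass_smul_left id hε.ne', ← hsplit, hεc]
  refine (convex_convexHull 𝕜 _).combo_interior_self_mem_interior hy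
    (s.centerMass_mem_convexHull (fun p hp => (hv p hp).le) hv_sum fun p hp => hp)
    (div_pos hε hw_sum) (div_nonneg hv_sum.le hw_sum.le) ?_
  rw [← add_div, div_eq_one_iff_eq hw_sum.ne', sum_sub_distrib, ← mul_sum, hc₁]
  ring

end Interior

theorem moment_map_mem_interior_general {n : ℕ} (S : Finset (Fin n → ℝ))
    (hdim : (interior (convexHull ℝ (S : Set (Fin n → ℝ)))).Nonempty)
    (x : Fin n → ℝ) (hx : ∀ j, 0 < x j) :
    (∑ p ∈ S, ∏ j, x j ^ p j)⁻¹ • ∑ p ∈ S, (∏ j, x j ^ p j) • p ∈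
      interior (convexHull ℝ (S : Set (Fin n → ℝ))) :=
  S.centerMass_mem_interior_convexHull
    (fun _ _ => prod_pos fun j _ => Real.rpow_pos_of_pos (hx j) _) hdim

/-- The moment map of an `n`-dimensional convex lattice polytope contained in the
positive orthant takes values in the interior of the polytope.  The polytope is
given as the convex hull of its (finite) set `S` of lattice points. -/
theorem moment_map_mem_interior {n : ℕ} (S : Finset (Fin n → ℝ)) (hS : S.Nonempty)
    (hlat : ∀ p ∈ S, ∀ j, ∃ m : ℤ, p j = (m : ℝ))
    (hpos : ∀ p ∈ S, ∀ j, 0 < p j)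
    (hdim : (interior (convexHull ℝ (S : Set (Fin n → ℝ)))).Nonempty)
    (x : Fin n → ℝ) (hx : ∀ j, 0 < x j) :
    (∑ p ∈ S, ∏ j, x j ^ p j)⁻¹ • ∑ p ∈ S, (∏ j, x j ^ p j) • p ∈
      interior (convexHull ℝ (S : Set (Fin n → ℝ))) :=
  moment_map_mem_interior_general S hdim x hx
end

section
/- For all λ ∈ (0,1) and κ ∈ ℝ, both roots of the real quadratic polynomial φ(X) = (λ − λ²) + (1 − 2λ + 2λ² + κ²)X + (λ − λ²)X² are negative real numbers. -/
/-- For `λ ∈ (0,1)` and `κ ∈ ℝ`, both roots of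
`φ(X) = (λ−λ²) + (1−2λ+2λ²+κ²)X + (λ−λ²)X²` are negative real numbers. -/
theorem quadratic_roots_negative (lam κ : ℝ) (h0 : 0 < lam) (h1 : lam < 1) :
    ∃ r s : ℝ, r < 0 ∧ s < 0 ∧ ∀ X : ℝ,
      (lam - lam ^ 2) + (1 - 2 * lam + 2 * lam ^ 2 + κ ^ 2) * X + (lam - lam ^ 2) * X ^ 2
        = (lam - lam ^ 2) * (X - r) * (X - s) := by
  set a := lam - lam ^ 2 with ha_def
  set b := 1 - 2 * lam + 2 * lam ^ 2 + κ ^ 2 with hb_def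
  have ha : 0 < a := by nlinarith
  have hb : 0 < b := by nlinarith [sq_nonneg (1 - lam), sq_nonneg lam, sq_nonneg κ]
  have hD : 0 ≤ b ^ 2 - 4 * a ^ 2 := by
    nlinarith [mul_nonneg (add_nonneg (sq_nonneg (1 - 2*lam)) (sq_nonneg κ))
      (add_nonneg zero_le_one (sq_nonneg κ))]
  set D := b ^ 2 - 4 * a ^ 2 with hD_def
  have hs2 : Real.sqrt D ^ 2 = D := Real.sq_sqrt hD
  have hsb : Real.sqrt D < b := by
    have : D < b ^ 2 := by nlinarith
    calc Real.sqrt D < Real.sqrt (b ^ 2) := Real.sqrt_lt_sqrt hD this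
      _ = b := by rw [Real.sqrt_sq hb.le]
  have hsnn : 0 ≤ Real.sqrt D := Real.sqrt_nonneg _
  refine ⟨(-b + Real.sqrt D) / (2 * a), (-b - Real.sqrt D) / (2 * a), ?_, ?_, ?_⟩
  · apply div_neg_of_neg_of_pos (by linarith) (by linarith)
  · apply div_neg_of_neg_of_pos (by linarith) (by linarith)
  · intro X
    obtain ⟨t, ht, ht2⟩ : ∃ t : ℝ, t = Real.sqrt D ∧ t ^ 2 = D := ⟨_, rfl, hs2⟩
    rw [← ht]
    have haD : a = (b ^ 2 - t ^ 2) / (4 * a) := by rw [ht2]; field_simp [hD_def]; ring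
    field_simp
    nlinarith [ht2]
end

section
/- Let D be a linear operator on ℝ^n with no negative real eigenvalue, λ ∈ (0,1), and κ ∈ ℝ. Then the operator (λ−λ²)·Id + (1−2λ+2λ²+κ²)·D + (λ−λ²)·D² is injective. -/
/-!
Writing `a = λ - λ²` and `b = 1 - 2λ + 2λ² + κ²`, we have `a > 0` and `b - 2a = (1 - 2λ)² + κ² ≥ 0`,
so `a X² + b X + a` has real roots, both negative. It therefore factors as `a (X + r) (X + s)`
with `r, s > 0`, and the operator is `a (D + r) (D + s)`, a composition of injective maps since
`-r` and `-s` are not eigenvalues of `D`.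
-/

theorem exists_pos_roots_of_discrim_nonneg {a b c : ℝ} (ha : 0 < a) (hb : 0 < b) (hc : 0 < c)
    (hdisc : 4 * a * c ≤ b ^ 2) :
    ∃ r s : ℝ, 0 < r ∧ 0 < s ∧ b = a * (r + s) ∧ c = a * (r * s) := by
  set d := Real.sqrt (b ^ 2 - 4 * a * c)
  have hd_sq : d ^ 2 = b ^ 2 - 4 * a * c := Real.sq_sqrt (by linarith)
  have hd_lt : d < b := (Real.sqrt_lt' hb).2 (by nlinarith)
  refine ⟨(b + d) / (2 * a), (b - d) / (2 * a), by positivity, div_pos (by linarith) (by positivity),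
    by field_simp; ring, ?_⟩
  field_simp
  linear_combination hd_sq

section

variable {K V : Type*} [AddCommGroup V]

theorem LinearMap.quadratic_eq_smul_comp [CommRing K] [Module K V] (f : V →ₗ[K] V) (a r s : K) :
    (a * (r * s)) • (LinearMap.id : V →ₗ[K] V) + (a * (r + s)) • f + a • (f ∘ₗ f) =
      a • ((f + r • LinearMap.id) ∘ₗ (f + s • LinearMap.id)) := by
  ext v
  simp only [LinearMap.add_apply, LinearMap.smul_apply, LinearMap.id_apply, LinearMap.comp_apply,
    map_add, map_smul]
  module

variable [Field K] [LinearOrder K] [IsStrictOrderedRing K] [Module K V] {f : V →ₗ[K] V}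

theorem LinearMap.injective_add_smul_id_of_no_neg_eigenvalue
    (hf : ∀ μ : K, μ < 0 → ∀ v, f v = μ • v → v = 0) {r : K} (hr : 0 < r) :
    Function.Injective ⇑(f + r • (LinearMap.id : V →ₗ[K] V)) := by
  refine (injective_iff_map_eq_zero _).2 fun v hv => hf (-r) (neg_lt_zero.2 hr) v ?_
  rw [LinearMap.add_apply, LinearMap.smul_apply, LinearMap.id_apply, add_eq_zero_iff_eq_neg] at hv
  rw [hv, neg_smul]

theorem LinearMap.injective_quadratic_of_no_neg_eigenvalue
    (hf : ∀ μ : K, μ < 0 → ∀ v, f v = μ • v → v = 0) {a r s : K} (ha : 0 < a) (hr : 0 < r)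
    (hs : 0 < s) :
    Function.Injective
      ⇑((a * (r * s)) • (LinearMap.id : V →ₗ[K] V) + (a * (r + s)) • f + a • (f ∘ₗ f)) := by
  rw [f.quadratic_eq_smul_comp, LinearMap.coe_smul]
  exact (smul_right_injective V ha.ne').comp
    ((f.injective_add_smul_id_of_no_neg_eigenvalue hf hr).comp
      (f.injective_add_smul_id_of_no_neg_eigenvalue hf hs))

end

/-- If `D` is a linear operator on `ℝⁿ` with no negative real eigenvalue, `λ ∈ (0,1)`
and `κ ∈ ℝ`, then `(λ−λ²)·Id + (1−2λ+2λ²+κ²)·D + (λ−λ²)·D²` is injective. -/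
theorem operator_poly_injective {n : ℕ} (D : (Fin n → ℝ) →ₗ[ℝ] (Fin n → ℝ))
    (hD : ∀ μ : ℝ, μ < 0 → ∀ v, D v = μ • v → v = 0)
    (lam κ : ℝ) (h0 : 0 < lam) (h1 : lam < 1) :
    Function.Injective
      ⇑((lam - lam ^ 2) • (LinearMap.id : (Fin n → ℝ) →ₗ[ℝ] (Fin n → ℝ))
        + (1 - 2 * lam + 2 * lam ^ 2 + κ ^ 2) • D
        + (lam - lam ^ 2) • (D ∘ₗ D)) := by
  set a := lam - lam ^ 2
  set b := 1 - 2 * lam + 2 * lam ^ 2 + κ ^ 2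
  have ha : 0 < a := by nlinarith
  have hba : 2 * a ≤ b := by nlinarith [sq_nonneg (1 - 2 * lam), sq_nonneg κ]
  obtain ⟨r, s, hr, hs, hb_eq, ha_eq⟩ :=
    exists_pos_roots_of_discrim_nonneg (b := b) ha (by linarith) ha (by nlinarith)
  have := D.injective_quadratic_of_no_neg_eigenvalue hD ha hr hs
  rwa [← hb_eq, ← ha_eq] at this
end
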